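/- arXiv:2006.12038 — 2 statements merged into one kernel-verified Lean document; each statement's English description precedes it below -/
import Mathlib

section
/- For any probability distribution F on the real line with bounded support (i.e., there exist reals u ≤ v such that F assigns probability 1 to [u,v]) and finite mean μ(F), and for any a > 0 and any b > μ(F), there exists a probability distribution F' on the real line with bounded support such that the Kullback–Leibler divergence D(F, F') ≤ a and the mean of F' satisfies μ(F') ≥ b. -/
open MeasureTheory Real Classical

/-- Kullback–Leibler divergence between measures on ℝ, as an extended real:
`∫ log(dF/dF') dF` when `F ≪ F'`, and `⊤` otherwise. -/
noncomputable def klDivergence (F F' : Measure ℝ) : EReal :=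
  if F ≪ F' then ((∫ x, Real.log (F.rnDeriv F' x).toReal ∂F : ℝ) : EReal) else ⊤

/-- A measure on ℝ has bounded support if it assigns probability one to some
compact interval `[u, v]`. -/
def HasBoundedSupport (F : Measure ℝ) : Prop :=
  ∃ u v : ℝ, u ≤ v ∧ F (Set.Icc u v) = 1

/-
Mixing F with weight p = e^{-a} against a Dirac mass gives F' ≥ e^{-a} F, so dF/dF' ≤ e^a and
D(F, F') ≤ a; placing the Dirac mass at a suitable point gives F' any prescribed mean.
-/

lemma MeasureTheory.Measure.rnDeriv_le_of_le_smul {α : Type*} [MeasurableSpace α]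
    {μ ν : Measure α} [SigmaFinite ν] {c : ENNReal} (h : μ ≤ c • ν) :
    ∀ᵐ x ∂ν, μ.rnDeriv ν x ≤ c := by
  refine ae_le_of_forall_setLIntegral_le_of_sigmaFinite (μ.measurable_rnDeriv ν) fun s _ _ ↦ ?_
  calc ∫⁻ x in s, μ.rnDeriv ν x ∂ν ≤ μ s := Measure.setLIntegral_rnDeriv_le s
    _ ≤ c * ν s := h s
    _ = ∫⁻ _ in s, c ∂ν := by rw [setLIntegral_const]

lemma klDivergence_le_of_le_smul {F F' : Measure ℝ} [IsProbabilityMeasure F] [SigmaFinite F']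
    {a : ℝ} (ha : 0 ≤ a) (h : F ≤ ENNReal.ofReal (exp a) • F') : klDivergence F F' ≤ a := by
  have hac : F ≪ F' := Measure.absolutelyContinuous_of_le_smul h
  have hlog : ∀ᵐ x ∂F, log (F.rnDeriv F' x).toReal ≤ a := by
    filter_upwards [hac.ae_le (Measure.rnDeriv_le_of_le_smul h)] with x hx
    have hx' : (F.rnDeriv F' x).toReal ≤ exp a := ENNReal.toReal_le_of_le_ofReal (exp_pos a).le hx
    rcases (ENNReal.toReal_nonneg : 0 ≤ (F.rnDeriv F' x).toReal).eq_or_lt with h0 | hpos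
    · rw [← h0, log_zero]; exact ha
    · exact (log_le_iff_le_exp hpos).mpr hx'
  rw [klDivergence, if_pos hac, EReal.coe_le_coe_iff]
  by_cases hint : Integrable (fun x ↦ log (F.rnDeriv F' x).toReal) F
  · calc ∫ x, log (F.rnDeriv F' x).toReal ∂F ≤ ∫ _, a ∂F := integral_mono_ae hint (by simp) hlog
      _ = a := by simp
  · rw [integral_undef hint]; exact ha

lemma ENNReal.ofReal_add_ofReal_one_sub {p : ℝ} (hp0 : 0 ≤ p) (hp1 : p ≤ 1) :
    ENNReal.ofReal p + ENNReal.ofReal (1 - p) = 1 := by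
  rw [← ENNReal.ofReal_add hp0 (sub_nonneg.mpr hp1), add_sub_cancel, ENNReal.ofReal_one]

noncomputable def diracMixture {α : Type*} [MeasurableSpace α] (μ : Measure α) (p : ℝ) (x : α) :
    Measure α :=
  ENNReal.ofReal p • μ + ENNReal.ofReal (1 - p) • Measure.dirac x

section diracMixture

variable {α : Type*} [MeasurableSpace α] (μ : Measure α) {p : ℝ} (x : α)

lemma isProbabilityMeasure_diracMixture [IsProbabilityMeasure μ] (hp0 : 0 ≤ p) (hp1 : p ≤ 1) :
    IsProbabilityMeasure (diracMixture μ p x) := by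
  constructor
  simp [diracMixture, ENNReal.ofReal_add_ofReal_one_sub hp0 hp1]

lemma le_smul_diracMixture (hp : 0 < p) : μ ≤ ENNReal.ofReal p⁻¹ • diracMixture μ p x := by
  intro s
  calc μ s = ENNReal.ofReal p⁻¹ * (ENNReal.ofReal p * μ s) := by
        rw [← mul_assoc, ← ENNReal.ofReal_mul (inv_nonneg.mpr hp.le), inv_mul_cancel₀ hp.ne',
          ENNReal.ofReal_one, one_mul]
    _ ≤ (ENNReal.ofReal p⁻¹ • diracMixture μ p x) s := by
        simp only [diracMixture, Measure.smul_apply, Measure.add_apply, smul_eq_mul]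
        gcongr
        exact le_self_add

end diracMixture

lemma hasBoundedSupport_diracMixture {F : Measure ℝ} [IsProbabilityMeasure F]
    (hF : HasBoundedSupport F) {p : ℝ} (hp0 : 0 ≤ p) (hp1 : p ≤ 1) (c : ℝ) :
    HasBoundedSupport (diracMixture F p c) := by
  obtain ⟨u, v, huv, hFuv⟩ := hF
  refine ⟨min u c, max v c, (min_le_left u c).trans (huv.trans (le_max_left v c)), ?_⟩
  have hF1 : F (Set.Icc (min u c) (max v c)) = 1 :=
    le_antisymm prob_le_one
      (hFuv ▸ measure_mono (Set.Icc_subset_Icc (min_le_left u c) (le_max_left v c)))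
  have hc : c ∈ Set.Icc (min u c) (max v c) := ⟨min_le_right u c, le_max_right v c⟩
  simp [diracMixture, hF1, hc, ENNReal.ofReal_add_ofReal_one_sub hp0 hp1]

lemma integral_id_diracMixture {F : Measure ℝ} (hF : Integrable (fun x ↦ x) F) {p : ℝ}
    (hp0 : 0 ≤ p) (hp1 : p ≤ 1) (c : ℝ) :
    ∫ x, x ∂(diracMixture F p c) = p * ∫ x, x ∂F + (1 - p) * c := by
  rw [diracMixture, integral_add_measure (hF.smul_measure ENNReal.ofReal_ne_top)
      ((integrable_dirac (by simp)).smul_measure ENNReal.ofReal_ne_top),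
    integral_smul_measure, integral_smul_measure, integral_dirac,
    ENNReal.toReal_ofReal hp0, ENNReal.toReal_ofReal (sub_nonneg.mpr hp1), smul_eq_mul,
    smul_eq_mul]

theorem bounded_perturbation_exists_general
    (F : Measure ℝ) [IsProbabilityMeasure F]
    (hF : HasBoundedSupport F)
    (hInt : Integrable (fun x => x) F)
    (a b : ℝ) (ha : 0 < a) :
    ∃ F' : Measure ℝ, IsProbabilityMeasure F' ∧ HasBoundedSupport F' ∧
      klDivergence F F' ≤ (a : EReal) ∧ b ≤ ∫ x, x ∂F' := by
  set p := exp (-a)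
  have hp0 : 0 < p := exp_pos _
  have hp1 : p < 1 := exp_lt_one_iff.mpr (neg_lt_zero.mpr ha)
  set c := (b - p * ∫ x, x ∂F) / (1 - p)
  have hF' := isProbabilityMeasure_diracMixture F c hp0.le hp1.le
  refine ⟨diracMixture F p c, hF', hasBoundedSupport_diracMixture hF hp0.le hp1.le c,
    klDivergence_le_of_le_smul ha.le ?_, ?_⟩
  · simpa [p, exp_neg] using le_smul_diracMixture F c hp0
  · rw [integral_id_diracMixture hInt hp0.le hp1.le, mul_div_cancel₀ _ (sub_ne_zero.mpr hp1.ne')]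
    linarith

theorem bounded_perturbation_exists
    (F : Measure ℝ) [IsProbabilityMeasure F]
    (hF : HasBoundedSupport F)
    (hInt : Integrable (fun x => x) F)
    (a b : ℝ) (ha : 0 < a) (hb : (∫ x, x ∂F) < b) :
    ∃ F' : Measure ℝ, IsProbabilityMeasure F' ∧ HasBoundedSupport F' ∧
      klDivergence F F' ≤ (a : EReal) ∧ b ≤ ∫ x, x ∂F' :=
  bounded_perturbation_exists_general F hF hInt a b ha
end

section
/- Let Φ : ℕ → ℝ be a nondecreasing function with Φ(t) → ∞ as t → ∞, and let c ∈ (0, 1). Define f(t) = exp((1/2)·(log Φ(t))^{1−c}) and g(t) = (log Φ(t))^{−c} (for t large enough that Φ(t) > 1). Then for every Δ > 0 there exists a natural number t_min such that for all t > t_min, (f(t)/Δ)^{1/g(t)} ≤ Φ(t). -/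
open Real Filter

theorem mom_scaling_function_consistency
    (Φ : ℕ → ℝ) (hmono : Monotone Φ) (htop : Tendsto Φ atTop atTop)
    (c : ℝ) (hc0 : 0 < c) (hc1 : c < 1) :
    ∀ Δ > (0 : ℝ), ∃ tmin : ℕ, ∀ t > tmin,
      ((Real.exp ((1 / 2) * (Real.log (Φ t)) ^ (1 - c)) / Δ)
          ^ (1 / ((Real.log (Φ t)) ^ (-c))) : ℝ) ≤ Φ t := by
  intro Δ hΔ
  set A : ℝ := max 0 (-Real.log Δ) with hA
  have hA0 : 0 ≤ A := le_max_left _ _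
  have h1c : 0 < 1 - c := by linarith
  set L0 : ℝ := max 1 ((2 * A + 1) ^ (1 / (1 - c))) with hL0
  have hL01 : (1 : ℝ) ≤ L0 := le_max_left _ _
  have hL0pos : 0 < L0 := lt_of_lt_of_le one_pos hL01
  have hev : ∀ᶠ t in atTop, Real.exp L0 ≤ Φ t := htop.eventually_ge_atTop _
  obtain ⟨N, hN⟩ := eventually_atTop.mp hev
  refine ⟨N, fun t ht => ?_⟩
  have hΦ : Real.exp L0 ≤ Φ t := hN t (le_of_lt ht)
  have hΦpos : 0 < Φ t := lt_of_lt_of_le (Real.exp_pos _) hΦ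
  set L : ℝ := Real.log (Φ t) with hLdef
  have hLge : L0 ≤ L := by
    have := Real.log_le_log (Real.exp_pos _) hΦ
    rwa [Real.log_exp] at this
  have hLpos : 0 < L := lt_of_lt_of_le hL0pos hLge
  -- key: A ≤ (1/2) * L^(1-c)
  have hpow : (2 * A + 1) ≤ L0 ^ (1 - c) := by
    have hb : (0 : ℝ) ≤ 2 * A + 1 := by linarith
    have h1 : ((2 * A + 1) ^ (1 / (1 - c))) ^ (1 - c) = 2 * A + 1 := by
      rw [← Real.rpow_mul hb, one_div_mul_cancel h1c.ne', Real.rpow_one]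
    calc (2 * A + 1) = ((2 * A + 1) ^ (1 / (1 - c))) ^ (1 - c) := h1.symm
      _ ≤ L0 ^ (1 - c) :=
        Real.rpow_le_rpow (Real.rpow_nonneg hb _) (le_max_right _ _) h1c.le
  have hkey : A ≤ (1 / 2) * L ^ (1 - c) := by
    have h2 : L0 ^ (1 - c) ≤ L ^ (1 - c) :=
      Real.rpow_le_rpow hL0pos.le hLge h1c.le
    nlinarith
  -- rewrite exponent and base
  have hexp : 1 / (L ^ (-c)) = L ^ c := by
    rw [Real.rpow_neg hLpos.le, one_div, inv_inv]
  have hxpos : 0 < Real.exp ((1 / 2) * L ^ (1 - c)) / Δ :=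
    div_pos (Real.exp_pos _) hΔ
  have hlogx : Real.log (Real.exp ((1 / 2) * L ^ (1 - c)) / Δ)
      = (1 / 2) * L ^ (1 - c) - Real.log Δ := by
    rw [Real.log_div (Real.exp_ne_zero _) hΔ.ne', Real.log_exp]
  rw [hexp, Real.rpow_def_of_pos hxpos, hlogx]
  have hLc : (0 : ℝ) ≤ L ^ c := Real.rpow_nonneg hLpos.le _
  have hmul : L ^ (1 - c) * L ^ c = L := by
    rw [← Real.rpow_add hLpos]
    ring_nf
    exact Real.rpow_one L
  have hstep : ((1 / 2) * L ^ (1 - c) - Real.log Δ) * L ^ c ≤ L := by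
    have hneg : -Real.log Δ ≤ A := le_max_right _ _
    have h3 : (1 / 2) * L ^ (1 - c) - Real.log Δ ≤ L ^ (1 - c) := by linarith
    calc ((1 / 2) * L ^ (1 - c) - Real.log Δ) * L ^ c
        ≤ L ^ (1 - c) * L ^ c := mul_le_mul_of_nonneg_right h3 hLc
      _ = L := hmul
  calc Real.exp (((1 / 2) * L ^ (1 - c) - Real.log Δ) * L ^ c)
      ≤ Real.exp L := Real.exp_le_exp.mpr hstep
    _ = Φ t := Real.exp_log hΦpos
end
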